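/- arXiv:2006.05606 — 2 statements merged into one kernel-verified Lean document; each statement's English description precedes it below -/
import Mathlib

section
/- For any real numbers U > 0 and C ≥ 0, and any quantity R satisfying R ≤ (R + 2C)/z + z U + V for all z > 1 (with V ≥ 0), one has R ≤ 2√(U(2C + V + U)) + 2U + V. -/
/-- If `R ≤ (R + 2C)/z + z·U + V` for all `z > 1`, with `U > 0`, `C ≥ 0`, `V ≥ 0`,
then `R ≤ 2√(U(2C + V + U)) + 2U + V`. -/
theorem self_bounding_regret (R U V C : ℝ) (hU : 0 < U) (hC : 0 ≤ C) (hV : 0 ≤ V)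
    (h : ∀ z : ℝ, 1 < z → R ≤ (R + 2 * C) / z + z * U + V) :
    R ≤ 2 * Real.sqrt (U * (2 * C + V + U)) + 2 * U + V := by
  set S := Real.sqrt (U * (2 * C + V + U)) with hSdef
  have hSpos : 0 < S := Real.sqrt_pos.mpr (by nlinarith)
  have hS2 : S ^ 2 = U * (2 * C + V + U) :=
    Real.sq_sqrt (by nlinarith)
  obtain ⟨z, hzdef⟩ : ∃ z : ℝ, z = 1 + S / U := ⟨_, rfl⟩
  have hz : 1 < z := by
    rw [hzdef]
    have : 0 < S / U := div_pos hSpos hU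
    linarith
  have hz0 : 0 < z := by linarith
  have h1 := h z hz
  have h2 : (R + 2 * C) / z * z = R + 2 * C := div_mul_cancel₀ _ (ne_of_gt hz0)
  have h3 : R * z ≤ R + 2 * C + (z * U + V) * z := by
    nlinarith [mul_le_mul_of_nonneg_right h1 hz0.le]
  have hzm : z - 1 = S / U := by rw [hzdef]; ring
  have h4 : R * (S / U) ≤ 2 * C + (z * U + V) * z := by
    rw [← hzm]; nlinarith
  have h5 : R * S ≤ (2 * C + (z * U + V) * z) * U := by
    have := mul_le_mul_of_nonneg_right h4 (le_of_lt hU)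
    calc R * S = R * (S / U) * U := by field_simp
    _ ≤ (2 * C + (z * U + V) * z) * U := this
  have h6 : (2 * C + (z * U + V) * z) * U = (2 * S + 2 * U + V) * S := by
    rw [hzdef]; field_simp; nlinarith [hS2]
  rw [h6] at h5
  exact le_of_mul_le_mul_right (by linarith [h5]) hSpos
end

section
/- Suppose a stochastic policy π and non-negative functions f : S → ℝ≥0 and g : S×A → ℝ≥0 on a layered MDP satisfy f(s_0) = 0 and, for all s ≠ s_0, f(s) ≤ ∑_{s' ∈ S_{k(s)−1}} ∑_{a'} g(s',a') P(s|s',a') + ∑_{s' ∈ S_{k(s)−1}} f(s') ∑_{a'} π(a'|s') P(s|s',a'). Then for all s ≠ s_0, f(s) ≤ ∑_{k=0}^{k(s)−1} ∑_{s' ∈ S_k} ∑_{a'} g(s',a') p^π(s|s',a'), where p^π is the reachability probability of π. -/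
open Finset

/-!
Unroll the recursive bound layer by layer, by strong induction on the layer of `s`. The
contribution of the last layer `S_{k(s)-1}` is the `g`-term of the hypothesis, because one step
of reachability is one step of `P`; the `f`-term is bounded by the induction hypothesis, and
pushing that bound one step forward through `π` and `P` turns `p^π(s'|u,a)` into `p^π(s|u,a)` by
the recursion defining `p^π`.
-/

namespace LayeredMDP

variable {S A R : Type*} [Fintype S] [Fintype A] [CommSemiring R]

def layer (lay : S → ℕ) (k : ℕ) : Finset S := univ.filter (fun s => lay s = k)

def stepProb (π : S → A → R) (P : S → A → S → R) (s s' : S) : R := ∑ a, π s a * P s a s'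

def layerSum (lay : S → ℕ) (g : S → A → R) (p : S → A → S → R) (n : ℕ) (s : S) : R :=
  ∑ k ∈ range n, ∑ u ∈ layer lay k, ∑ a, g u a * p u a s

lemma mem_layer {lay : S → ℕ} {k : ℕ} {s : S} : s ∈ layer lay k ↔ lay s = k := by
  simp [layer]

lemma layerSum_succ {lay : S → ℕ} {P p : S → A → S → R} (g : S → A → R)
    (hrec1 : ∀ s a s', lay s' = lay s + 1 → p s a s' = P s a s') {n : ℕ} {s : S}
    (hn : lay s = n + 1) :
    layerSum lay g p (n + 1) s
      = layerSum lay g p n s + ∑ s' ∈ layer lay n, ∑ a, g s' a * P s' a s := by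
  rw [layerSum, sum_range_succ, ← layerSum]
  congr 1
  refine sum_congr rfl fun s' hs' => sum_congr rfl fun a _ => ?_
  rw [hrec1 s' a s (by rw [hn, mem_layer.mp hs'])]

lemma sum_layer_layerSum_mul_stepProb {lay : S → ℕ} {P p : S → A → S → R} {π : S → A → R}
    (g : S → A → R)
    (hrec2 : ∀ s a s', lay s + 1 < lay s' →
      p s a s' = ∑ sm ∈ layer lay (lay s' - 1), p s a sm * stepProb π P sm s')
    {n : ℕ} {s : S} (hn : lay s = n + 1) :
    ∑ s' ∈ layer lay n, layerSum lay g p n s' * stepProb π P s' s = layerSum lay g p n s := by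
  simp only [layerSum, sum_mul]
  rw [sum_comm]
  refine sum_congr rfl fun k hk => ?_
  rw [sum_comm]
  refine sum_congr rfl fun u hu => ?_
  rw [sum_comm]
  refine sum_congr rfl fun a _ => ?_
  have hu : lay u + 1 < lay s := by
    rw [mem_layer.mp hu, hn]
    exact Nat.succ_lt_succ (mem_range.mp hk)
  rw [hrec2 u a s hu, hn, Nat.add_sub_cancel, mul_sum]
  exact sum_congr rfl fun s' _ => by ring

variable [PartialOrder R] [IsOrderedRing R]

theorem le_layerSum_of_le_step {lay : S → ℕ} {P p : S → A → S → R} {π : S → A → R}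
    {f : S → R} {g : S → A → R}
    (hP0 : ∀ s a s', 0 ≤ P s a s') (hπ0 : ∀ s a, 0 ≤ π s a)
    (hrec1 : ∀ s a s', lay s' = lay s + 1 → p s a s' = P s a s')
    (hrec2 : ∀ s a s', lay s + 1 < lay s' →
      p s a s' = ∑ sm ∈ layer lay (lay s' - 1), p s a sm * stepProb π P sm s')
    (hbase : ∀ s, lay s = 0 → f s ≤ 0)
    (hstep : ∀ n s, lay s = n + 1 →
      f s ≤ ∑ s' ∈ layer lay n, ∑ a, g s' a * P s' a s
        + ∑ s' ∈ layer lay n, f s' * stepProb π P s' s)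
    (s : S) : f s ≤ layerSum lay g p (lay s) s := by
  induction hs : lay s using Nat.strong_induction_on generalizing s with
  | _ m ih =>
  cases m with
  | zero => simpa [layerSum] using hbase s hs
  | succ n =>
  have hprev : ∑ s' ∈ layer lay n, f s' * stepProb π P s' s ≤ layerSum lay g p n s := by
    rw [← sum_layer_layerSum_mul_stepProb g hrec2 hs]
    refine sum_le_sum fun s' hs' => ?_
    have hfs' := ih n n.lt_succ_self s' (mem_layer.mp hs')
    have hw : 0 ≤ stepProb π P s' s := sum_nonneg fun a _ => mul_nonneg (hπ0 s' a) (hP0 s' a s)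
    exact mul_le_mul_of_nonneg_right hfs' hw
  calc f s ≤ ∑ s' ∈ layer lay n, ∑ a, g s' a * P s' a s
        + ∑ s' ∈ layer lay n, f s' * stepProb π P s' s := hstep n s hs
    _ ≤ ∑ s' ∈ layer lay n, ∑ a, g s' a * P s' a s + layerSum lay g p n s := by gcongr
    _ = layerSum lay g p (n + 1) s := by rw [layerSum_succ g hrec1 hs, add_comm]

end LayeredMDP

theorem induction_state_reach_prob_general {S A : Type} [Fintype S] [Fintype A]
    (lay : S → ℕ) (s0 : S) (P : S → A → S → ℝ) (π : S → A → ℝ)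
    (hlay0 : ∀ s, lay s = 0 ↔ s = s0)
    (hP0 : ∀ s a s', 0 ≤ P s a s')
    (hπ0 : ∀ s a, 0 ≤ π s a)
    (p : S → A → S → ℝ)
    (hrec1 : ∀ s a s', lay s' = lay s + 1 → p s a s' = P s a s')
    (hrec2 : ∀ s a s', lay s + 1 < lay s' →
      p s a s' = ∑ sm ∈ univ.filter (fun sm => lay sm = lay s' - 1),
        p s a sm * ∑ a', π sm a' * P sm a' s')
    (f : S → ℝ) (g : S → A → ℝ)
    (hfs0 : f s0 = 0)
    (hind : ∀ s, s ≠ s0 →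
      f s ≤ (∑ s' ∈ univ.filter (fun s' => lay s' = lay s - 1), ∑ a', g s' a' * P s' a' s)
        + ∑ s' ∈ univ.filter (fun s' => lay s' = lay s - 1),
            f s' * ∑ a', π s' a' * P s' a' s) :
    ∀ s, s ≠ s0 →
      f s ≤ ∑ k ∈ Finset.range (lay s), ∑ s' ∈ univ.filter (fun s' => lay s' = k),
        ∑ a', g s' a' * p s' a' s := by
  have hbase : ∀ s, lay s = 0 → f s ≤ 0 := fun s hs => ((hlay0 s).mp hs ▸ hfs0).le
  have hstep : ∀ n s, lay s = n + 1 → f s ≤ ∑ s' ∈ LayeredMDP.layer lay n, ∑ a, g s' a * P s' a s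
      + ∑ s' ∈ LayeredMDP.layer lay n, f s' * LayeredMDP.stepProb π P s' s := by
    intro n s hs
    have hs0 : s ≠ s0 := fun h => by simp [(hlay0 s).mpr h] at hs
    have h := hind s hs0
    rwa [hs, Nat.add_sub_cancel] at h
  exact fun s _ => LayeredMDP.le_layerSum_of_le_step hP0 hπ0 hrec1 hrec2 hbase hstep s

/-- Key induction lemma: if a stochastic policy `π` and non-negative functions
`f : S → ℝ` and `g : S × A → ℝ` on a layered MDP satisfy `f s₀ = 0` and, for every
`s ≠ s₀`,
`f s ≤ ∑_{s' ∈ S_{k(s)-1}} ∑_{a'} g s' a' · P(s|s',a')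
      + ∑_{s' ∈ S_{k(s)-1}} f s' · ∑_{a'} π(a'|s') P(s|s',a')`,
then for all `s ≠ s₀`,
`f s ≤ ∑_{k < k(s)} ∑_{s' ∈ S_k} ∑_{a'} g s' a' · p^π(s|s',a')`,
where `p^π` is the reachability probability (given by the recursion hypotheses). -/
theorem induction_state_reach_prob {S A : Type} [Fintype S] [Fintype A]
    [DecidableEq S]
    (lay : S → ℕ) (L : ℕ) (s0 : S) (P : S → A → S → ℝ) (π : S → A → ℝ)
    (hlay0 : ∀ s, lay s = 0 ↔ s = s0)
    (hP0 : ∀ s a s', 0 ≤ P s a s')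
    (hPlayer : ∀ s a s', P s a s' ≠ 0 → lay s' = lay s + 1)
    (hπ0 : ∀ s a, 0 ≤ π s a) (hπsum : ∀ s, ∑ a, π s a = 1)
    (p : S → A → S → ℝ)
    (hp0 : ∀ s a s', 0 ≤ p s a s')
    (hrec0 : ∀ s a s', lay s' ≤ lay s → p s a s' = 0)
    (hrec1 : ∀ s a s', lay s' = lay s + 1 → p s a s' = P s a s')
    (hrec2 : ∀ s a s', lay s + 1 < lay s' →
      p s a s' = ∑ sm ∈ univ.filter (fun sm => lay sm = lay s' - 1),
        p s a sm * ∑ a', π sm a' * P sm a' s')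
    (f : S → ℝ) (g : S → A → ℝ)
    (hf0 : ∀ s, 0 ≤ f s) (hg0 : ∀ s a, 0 ≤ g s a)
    (hfs0 : f s0 = 0)
    (hind : ∀ s, s ≠ s0 →
      f s ≤ (∑ s' ∈ univ.filter (fun s' => lay s' = lay s - 1), ∑ a', g s' a' * P s' a' s)
        + ∑ s' ∈ univ.filter (fun s' => lay s' = lay s - 1),
            f s' * ∑ a', π s' a' * P s' a' s) :
    ∀ s, s ≠ s0 →
      f s ≤ ∑ k ∈ Finset.range (lay s), ∑ s' ∈ univ.filter (fun s' => lay s' = k),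
        ∑ a', g s' a' * p s' a' s :=
  induction_state_reach_prob_general lay s0 P π hlay0 hP0 hπ0 p hrec1 hrec2 f g hfs0 hind
end
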